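/- arXiv:2003.01292 — 3 statements merged into one kernel-verified Lean document; each statement's English description precedes it below -/
import Mathlib

section
/- Let m ≤ n and let A = S·D·T, where S ∈ GL_m(Z_h), T ∈ GL_n(Z_h), and D ∈ Z_h^{m×n} is the matrix whose (c,c) entry equals ∏_{i=1}^t p_i^{α_{ic}} for c = 1,…,m and whose other entries are 0, with exponents satisfying 0 ≤ α_{i1} ≤ α_{i2} ≤ … ≤ α_{im} ≤ s_i for each i = 1,…,t. Then the McCoy rank of A equals the largest c such that (α_{1c}, α_{2c}, …, α_{tc}) = (0,…,0) (and rk(A) = 0 if no such c exists). -/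
/-!
Minors ideals only shrink under multiplication by arbitrary matrices (a weak Cauchy–Binet
formula), so they are unchanged by invertible factors and `rk(S D T) = rk(D)`. Because the
diagonal entries of `D` form a divisibility chain, every `k × k` minor of `D` is divisible by the
leading one, so `I_k(D)` is principal, generated by the product of the first `k` diagonal entries.
In the finite ring `Z_h` a principal ideal has zero annihilator iff its generator is a unit, and a
product of powers of the `p_i` is a unit mod `h` iff all exponents vanish.
-/

open scoped Matrix BigOperators

namespace Paper

def HasRightInv {R : Type*} [CommRing R] {m n : ℕ} (A : Matrix (Fin m) (Fin n) R) : Prop :=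
  ∃ B : Matrix (Fin n) (Fin m) R, A * B = 1

def rowSpace {R : Type*} [CommRing R] {m n : ℕ} (A : Matrix (Fin m) (Fin n) R) :
    Submodule R (Fin n → R) :=
  Submodule.span R (Set.range fun i => A i)

def IsSubspaceOfDim {R : Type*} [CommRing R] (n m : ℕ) (V : Submodule R (Fin n → R)) : Prop :=
  ∃ A : Matrix (Fin m) (Fin n) R, HasRightInv A ∧ rowSpace A = V

def Unimodular {R : Type*} [CommRing R] {m n : ℕ} (v : Fin m → Fin n → R) : Prop :=
  HasRightInv (Matrix.of v)

noncomputable def sdim {R : Type*} [CommRing R] {n : ℕ} (V : Submodule R (Fin n → R)) : ℕ :=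
  sSup {m | ∃ v : Fin m → Fin n → R, (∀ i, v i ∈ V) ∧ Unimodular v}

def minorsIdeal {R : Type*} [CommRing R] {m n : ℕ} (A : Matrix (Fin m) (Fin n) R) (k : ℕ) :
    Ideal R :=
  Ideal.span {d | ∃ (f : Fin k → Fin m) (g : Fin k → Fin n), d = (A.submatrix f g).det}

noncomputable def mccoyRank {R : Type*} [CommRing R] {m n : ℕ} (A : Matrix (Fin m) (Fin n) R) : ℕ :=
  sSup {k | ∀ x : R, (∀ y ∈ minorsIdeal A k, x * y = 0) → x = 0}

noncomputable def innerRank {R : Type*} [CommRing R] {m n : ℕ} (A : Matrix (Fin m) (Fin n) R) : ℕ :=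
  sInf {r | ∃ (B : Matrix (Fin m) (Fin r) R) (C : Matrix (Fin r) (Fin n) R), A = B * C}

noncomputable def joinDim {R : Type*} [CommRing R] {n : ℕ} (A B : Submodule R (Fin n → R)) : ℕ :=
  sInf {d | ∃ W : Submodule R (Fin n → R), IsSubspaceOfDim n d W ∧ A ≤ W ∧ B ≤ W}

def mapSub {R S : Type*} [CommRing R] [CommRing S] (f : R →+* S) {n : ℕ}
    (V : Submodule R (Fin n → R)) : Submodule S (Fin n → S) :=
  Submodule.span S ((fun v (j : Fin n) => f (v j)) '' (V : Set (Fin n → R)))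

def dualSub {R : Type*} [CommRing R] {n : ℕ} (V : Submodule R (Fin n → R)) :
    Submodule R (Fin n → R) where
  carrier := {y | ∀ x ∈ V, ∑ j, y j * x j = 0}
  add_mem' := by
    intro a b ha hb
    intro x hx
    have h1 : ∑ j, (a + b) j * x j = (∑ j, a j * x j) + ∑ j, b j * x j := by
      rw [← Finset.sum_add_distrib]
      exact Finset.sum_congr rfl fun j _ => by simp [add_mul]
    simp only [Set.mem_setOf_eq] at ha hb
    rw [h1, ha x hx, hb x hx, add_zero]
  zero_mem' := by
    intro x hx
    simp
  smul_mem' := by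
    intro c a ha
    intro x hx
    simp only [Set.mem_setOf_eq] at ha
    have h1 : ∑ j, (c • a) j * x j = c * ∑ j, a j * x j := by
      rw [Finset.mul_sum]
      exact Finset.sum_congr rfl fun j _ => by simp [mul_assoc]
    rw [h1, ha x hx, mul_zero]

def grassmannGraph (R : Type*) [CommRing R] (m n r : ℕ) :
    SimpleGraph {V : Submodule R (Fin n → R) // IsSubspaceOfDim n m V} where
  Adj A B := A ≠ B ∧ ((m : ℤ) - (r : ℤ) < (sdim (A.1 ⊓ B.1) : ℤ))
  symm := by
    constructor
    intro A B hAB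
    refine ⟨hAB.1.symm, ?_⟩
    rw [inf_comm]
    exact hAB.2
  loopless := by
    constructor
    intro A hA
    exact hA.1 rfl

noncomputable def cliqueNum {V : Type*} (G : SimpleGraph V) : ℕ :=
  sSup {c | ∃ S : Set V, G.IsClique S ∧ S.ncard = c}

noncomputable def indepNum {V : Type*} (G : SimpleGraph V) : ℕ :=
  sSup {c | ∃ S : Set V, (S.Pairwise fun a b => ¬ G.Adj a b) ∧ S.ncard = c}

noncomputable def gaussQ (q a b : ℕ) : ℚ :=
  ∏ j ∈ Finset.range b, ((q : ℚ) ^ (a - j) - 1) / ((q : ℚ) ^ (b - j) - 1)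
end Paper

section Determinants

variable {R : Type*} [CommRing R]

theorem det_submatrix_eq_zero_of_not_injective {k m n : ℕ} (A : Matrix (Fin m) (Fin n) R)
    {f : Fin k → Fin m} (hf : ¬ Function.Injective f) (g : Fin k → Fin n) :
    (A.submatrix f g).det = 0 := by
  obtain ⟨i, j, hij, hne⟩ := Function.not_injective_iff.mp hf
  exact Matrix.det_zero_of_row_eq hne (funext fun _ => by simp [hij])

/-- A weak Cauchy–Binet formula: expanding `det (P * Q)` multilinearly in its rows. -/
theorem det_mul_mem_of_forall_det_submatrix_mem {k b : ℕ} (P : Matrix (Fin k) (Fin b) R)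
    (Q : Matrix (Fin b) (Fin k) R) {I : Ideal R}
    (hQ : ∀ φ : Fin k → Fin b, (Q.submatrix φ id).det ∈ I) : (P * Q).det ∈ I := by
  have hrows :
      (P * Q).det = Matrix.detRowAlternating fun i : Fin k => ∑ r : Fin b, P i r • Q r := by
    rw [show P * Q = Matrix.of fun i => ∑ r, P i r • Q r by
      ext i j; simp [Matrix.mul_apply, Finset.sum_apply]]
    rfl
  have hexpand : Matrix.detRowAlternating (fun i : Fin k => ∑ r : Fin b, P i r • Q r)
      = ∑ φ : Fin k → Fin b, Matrix.detRowAlternating fun i => P i (φ i) • Q (φ i) :=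
    Matrix.detRowAlternating.toMultilinearMap.map_sum fun i r => P i r • Q r
  rw [hrows, hexpand]
  refine Submodule.sum_mem _ fun φ _ => ?_
  have hsmul : Matrix.detRowAlternating (fun i : Fin k => P i (φ i) • Q (φ i))
      = (∏ i, P i (φ i)) • Matrix.detRowAlternating fun i : Fin k => Q (φ i) :=
    MultilinearMap.map_smul_univ _ _ _
  rw [hsmul, smul_eq_mul]
  exact I.mul_mem_left _ (hQ φ)

end Determinants

theorem annihilator_span_singleton_eq_bot_iff_isUnit {R : Type*} [CommRing R] [Finite R]
    (a : R) : (Ideal.span {a}).annihilator = ⊥ ↔ IsUnit a := by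
  simp only [Submodule.eq_bot_iff, Ideal.span, Submodule.mem_annihilator_span_singleton,
    smul_eq_mul, isUnit_iff_mem_nonZeroDivisors_of_finite, mem_nonZeroDivisors_iff_right]

theorem Fin.val_le_of_strictMono {k m : ℕ} {e : Fin k → Fin m} (he : StrictMono e)
    (c : Fin k) : (c : ℕ) ≤ e c := by
  obtain ⟨c, hc⟩ := c
  induction c with
  | zero => exact Nat.zero_le _
  | succ j ih =>
    have hlt : (e ⟨j, by omega⟩ : ℕ) < e ⟨j + 1, hc⟩ :=
      he (Fin.mk_lt_mk.mpr j.lt_succ_self)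
    have hj : j ≤ (e ⟨j, by omega⟩ : ℕ) := ih _
    exact hj.trans_lt hlt

-- Sort the chosen indices: the `c`-th smallest of them is at least `c`.
theorem prod_castLE_dvd_prod_of_injective {M : Type*} [CommMonoid M] {k m : ℕ} (hk : k ≤ m)
    {d : Fin m → M} (hd : ∀ ⦃c c'⦄, c ≤ c' → d c ∣ d c') {f : Fin k → Fin m}
    (hf : Function.Injective f) : ∏ c : Fin k, d (Fin.castLE hk c) ∣ ∏ c, d (f c) := by
  classical
  set s := Finset.univ.image f
  have hcard : s.card = k := by simp [s, Finset.card_image_of_injective _ hf]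
  set e := s.orderEmbOfFin hcard
  have hf_prod : ∏ c, d (f c) = ∏ x ∈ s, d x :=
    (Finset.prod_image fun a _ b _ h => hf h).symm
  have he_prod : ∏ c, d (e c) = ∏ x ∈ s, d x := by
    conv_rhs => rw [← s.image_orderEmbOfFin_univ hcard]
    exact (Finset.prod_image fun a _ b _ h => e.injective h).symm
  rw [hf_prod, ← he_prod]
  exact Finset.prod_dvd_prod_of_dvd _ _ fun c _ =>
    hd (Fin.le_def.mpr (Fin.val_le_of_strictMono e.strictMono c))

theorem Nat.coprime_prod_pow_iff {ι : Type*} [Fintype ι] {p : ι → ℕ} {h : ℕ}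
    (hp : ∀ i, (p i).Prime) (hdvd : ∀ i, p i ∣ h) (a : ι → ℕ) :
    Nat.Coprime (∏ i, p i ^ a i) h ↔ ∀ i, a i = 0 := by
  simp only [Nat.coprime_prod_left_iff, Finset.mem_univ, true_implies]
  refine forall_congr' fun i => ⟨fun hcop => ?_, fun hi => by simp [hi]⟩
  by_contra hi
  rw [Nat.coprime_pow_left_iff (Nat.pos_of_ne_zero hi), (hp i).coprime_iff_not_dvd] at hcop
  exact hcop (hdvd i)

namespace Paper

theorem mccoyRank_eq_sSup_annihilator {R : Type*} [CommRing R] {m n : ℕ}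
    (A : Matrix (Fin m) (Fin n) R) :
    mccoyRank A = sSup {k | (minorsIdeal A k).annihilator = ⊥} := by
  simp only [mccoyRank, Submodule.eq_bot_iff, Submodule.mem_annihilator, smul_eq_mul]

section Minors

variable {R : Type*} [CommRing R]

theorem minorsIdeal_transpose {m n : ℕ} (A : Matrix (Fin m) (Fin n) R) (k : ℕ) :
    minorsIdeal Aᵀ k = minorsIdeal A k := by
  have key : ∀ {m n : ℕ} (A : Matrix (Fin m) (Fin n) R),
      minorsIdeal Aᵀ k ≤ minorsIdeal A k := by
    intro m n A
    refine Ideal.span_le.mpr ?_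
    rintro _ ⟨f, g, rfl⟩
    rw [← Matrix.transpose_submatrix, Matrix.det_transpose]
    exact Ideal.subset_span ⟨g, f, rfl⟩
  exact le_antisymm (key A) (by simpa using key Aᵀ)

theorem minorsIdeal_mul_le_right {a b c : ℕ} (M : Matrix (Fin a) (Fin b) R)
    (N : Matrix (Fin b) (Fin c) R) (k : ℕ) : minorsIdeal (M * N) k ≤ minorsIdeal N k := by
  refine Ideal.span_le.mpr ?_
  rintro _ ⟨f, g, rfl⟩
  rw [SetLike.mem_coe, Matrix.submatrix_mul M N f id g Function.bijective_id]
  exact det_mul_mem_of_forall_det_submatrix_mem _ _ fun φ =>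
    Ideal.subset_span ⟨φ, g, by rw [Matrix.submatrix_submatrix]; rfl⟩

theorem minorsIdeal_mul_le_left {a b c : ℕ} (M : Matrix (Fin a) (Fin b) R)
    (N : Matrix (Fin b) (Fin c) R) (k : ℕ) : minorsIdeal (M * N) k ≤ minorsIdeal M k := by
  rw [← minorsIdeal_transpose, Matrix.transpose_mul, ← minorsIdeal_transpose M]
  exact minorsIdeal_mul_le_right _ _ k

theorem minorsIdeal_mul_mul_of_isUnit {m n : ℕ} {S : Matrix (Fin m) (Fin m) R}
    {T : Matrix (Fin n) (Fin n) R} (hS : IsUnit S) (hT : IsUnit T)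
    (D : Matrix (Fin m) (Fin n) R) (k : ℕ) : minorsIdeal (S * D * T) k = minorsIdeal D k := by
  have hle : ∀ (S : Matrix (Fin m) (Fin m) R) (T : Matrix (Fin n) (Fin n) R)
      (D : Matrix (Fin m) (Fin n) R),
      minorsIdeal (S * D * T) k ≤ minorsIdeal D k := fun S T D =>
    (minorsIdeal_mul_le_left _ T k).trans (minorsIdeal_mul_le_right S D k)
  obtain ⟨u, rfl⟩ := hS
  obtain ⟨v, rfl⟩ := hT
  refine le_antisymm (hle _ _ D) ?_
  have hD : D = u.inv * (u.val * D * v.val) * v.inv := by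
    rw [← Matrix.mul_assoc, ← Matrix.mul_assoc, u.inv_val, Matrix.one_mul, Matrix.mul_assoc,
      v.val_inv, Matrix.mul_one]
  exact (congrArg (minorsIdeal · k) hD).le.trans (hle _ _ _)

theorem minorsIdeal_eq_bot_of_lt {m n k : ℕ} (hk : m < k) (A : Matrix (Fin m) (Fin n) R) :
    minorsIdeal A k = ⊥ := by
  refine Ideal.span_eq_bot.mpr ?_
  rintro _ ⟨f, g, rfl⟩
  refine det_submatrix_eq_zero_of_not_injective A (fun hf => ?_) g
  have := Fintype.card_le_of_injective f hf
  simp only [Fintype.card_fin] at this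
  omega

end Minors

section Diagonal

variable {R : Type*} [CommRing R] {m n : ℕ} {d : Fin m → R} {D : Matrix (Fin m) (Fin n) R}

theorem minorsIdeal_eq_span_prod_of_diag {k : ℕ} (hk : k ≤ m) (hmn : m ≤ n)
    (hd : ∀ ⦃c c'⦄, c ≤ c' → d c ∣ d c')
    (hD : ∀ c j, D c j = if (j : ℕ) = c then d c else 0) :
    minorsIdeal D k = Ideal.span {∏ c : Fin k, d (Fin.castLE hk c)} := by
  refine le_antisymm (Ideal.span_le.mpr ?_) ?_
  · rintro _ ⟨f, g, rfl⟩
    rw [SetLike.mem_coe, Ideal.mem_span_singleton]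
    by_cases hf : Function.Injective f
    · have hrows : (D.submatrix f g).det = (∏ i, d (f i)) *
          (Matrix.of fun i j => if (g j : ℕ) = f i then (1 : R) else 0).det := by
        rw [← Matrix.det_mul_column]
        congr 1
        ext i j
        simp [hD]
      rw [hrows]
      exact (prod_castLE_dvd_prod_of_injective hk hd hf).mul_right _
    · rw [det_submatrix_eq_zero_of_not_injective D hf g]
      exact dvd_zero _
  · have hlead : D.submatrix (Fin.castLE hk) (Fin.castLE (hk.trans hmn))
        = Matrix.diagonal fun c => d (Fin.castLE hk c) := by
      ext i j
      simp [hD, Matrix.diagonal_apply, Fin.ext_iff, eq_comm]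
    rw [Ideal.span_singleton_le_iff_mem, ← Matrix.det_diagonal, ← hlead]
    exact Ideal.subset_span ⟨_, _, rfl⟩

theorem annihilator_minorsIdeal_eq_bot_iff_of_diag [Finite R] [Nontrivial R] {k : ℕ}
    (hmn : m ≤ n) (hd : ∀ ⦃c c'⦄, c ≤ c' → d c ∣ d c')
    (hD : ∀ c j, D c j = if (j : ℕ) = c then d c else 0) :
    (minorsIdeal D k).annihilator = ⊥ ↔
      k ≤ m ∧ ∀ c : Fin m, (c : ℕ) < k → IsUnit (d c) := by
  by_cases hk : k ≤ m
  · rw [minorsIdeal_eq_span_prod_of_diag hk hmn hd hD,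
      annihilator_span_singleton_eq_bot_iff_isUnit, IsUnit.prod_univ_iff]
    exact ⟨fun h => ⟨hk, fun c hc => h ⟨c, hc⟩⟩, fun h c => h.2 _ c.isLt⟩
  · rw [minorsIdeal_eq_bot_of_lt (not_le.mp hk), Submodule.annihilator_bot]
    simp [hk]

end Diagonal

theorem stmt_0_general (t : ℕ) (ht : 1 ≤ t) (p s : Fin t → ℕ)
    (hp : ∀ i, (p i).Prime) (hs : ∀ i, 1 ≤ s i)
    (h : ℕ) (hh : h = ∏ i, p i ^ s i)
    (m n : ℕ) (hmn : m ≤ n)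
    (α : Fin t → Fin m → ℕ)
    (hmono : ∀ i, Monotone (α i))
    (S : Matrix (Fin m) (Fin m) (ZMod h)) (hS : IsUnit S)
    (T : Matrix (Fin n) (Fin n) (ZMod h)) (hT : IsUnit T)
    (D : Matrix (Fin m) (Fin n) (ZMod h))
    (hD : ∀ (c : Fin m) (j : Fin n),
      D c j = if (j : ℕ) = (c : ℕ) then ((∏ i, p i ^ α i c : ℕ) : ZMod h) else 0)
    (A : Matrix (Fin m) (Fin n) (ZMod h)) (hA : A = S * D * T) :
    mccoyRank A = sSup {c | c ≤ m ∧ ∀ j : Fin m, (j : ℕ) < c → ∀ i, α i j = 0} := by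
  have hp_dvd : ∀ i, p i ∣ h := fun i => hh ▸
    (dvd_pow_self _ (Nat.one_le_iff_ne_zero.mp (hs i))).trans
      (Finset.dvd_prod_of_mem _ (Finset.mem_univ i))
  have : NeZero h :=
    ⟨hh ▸ Finset.prod_ne_zero_iff.mpr fun i _ => pow_ne_zero _ (hp i).ne_zero⟩
  have : Nontrivial (ZMod h) :=
    ZMod.nontrivial_iff.mpr fun h1 => (hp ⟨0, ht⟩).not_dvd_one (h1 ▸ hp_dvd _)
  have hd : ∀ ⦃c c' : Fin m⦄, c ≤ c' →
      ((∏ i, p i ^ α i c : ℕ) : ZMod h) ∣ ((∏ i, p i ^ α i c' : ℕ) : ZMod h) :=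
    fun c c' hcc => Nat.cast_dvd_cast <|
      Finset.prod_dvd_prod_of_dvd _ _ fun i _ => pow_dvd_pow _ (hmono i hcc)
  rw [mccoyRank_eq_sSup_annihilator, hA]
  congr 1
  ext k
  rw [Set.mem_ofPred_eq, minorsIdeal_mul_mul_of_isUnit hS hT,
    annihilator_minorsIdeal_eq_bot_iff_of_diag hmn hd hD]
  simp only [ZMod.isUnit_iff_coprime, Nat.coprime_prod_pow_iff hp hp_dvd, Set.mem_ofPred_eq]

theorem stmt_0 (t : ℕ) (ht : 1 ≤ t) (p s : Fin t → ℕ)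
    (hp : ∀ i, (p i).Prime) (hs : ∀ i, 1 ≤ s i) (hpinj : Function.Injective p)
    (h : ℕ) (hh : h = ∏ i, p i ^ s i)
    (m n : ℕ) (hmn : m ≤ n)
    (α : Fin t → Fin m → ℕ)
    (hmono : ∀ i, Monotone (α i))
    (hle : ∀ i c, α i c ≤ s i)
    (S : Matrix (Fin m) (Fin m) (ZMod h)) (hS : IsUnit S)
    (T : Matrix (Fin n) (Fin n) (ZMod h)) (hT : IsUnit T)
    (D : Matrix (Fin m) (Fin n) (ZMod h))
    (hD : ∀ (c : Fin m) (j : Fin n),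
      D c j = if (j : ℕ) = (c : ℕ) then ((∏ i, p i ^ α i c : ℕ) : ZMod h) else 0)
    (A : Matrix (Fin m) (Fin n) (ZMod h)) (hA : A = S * D * T) :
    mccoyRank A = sSup {c | c ≤ m ∧ ∀ j : Fin m, (j : ℕ) < c → ∀ i, α i j = 0} :=
  stmt_0_general t ht p s hp hs h hh m n hmn α hmono S hS T hT D hD A hA

end Paper
end

section
/- Let m ≤ n and suppose α_1, α_2, …, α_m ∈ Z_h^n are linearly independent over Z_h. Then α_1,…,α_m can be extended to a basis of Z_h^n: there exist α_{m+1},…,α_n ∈ Z_h^n such that the family (α_1,…,α_n) is a basis of the free Z_h-module Z_h^n. -/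
/-! A vector `v ∈ (ZMod h)ⁿ` with trivial annihilator generates the unit ideal, since a
non-zero-divisor of the finite principal ideal ring `ZMod h` is a unit. As units of `ZMod d` lift
to `ZMod h` for `d ∣ h ≠ 0`, a transvection then makes the first coordinate of `v` a unit, and a
dilation followed by a second transvection carries `v` to the first standard basis vector.
Doing this for `α₁`, then for the remaining `αᵢ` projected to the last `n - 1` coordinates, and
correcting by a block-triangular automorphism, yields an automorphism sending every `αᵢ` to a
standard basis vector; its inverse maps the standard basis to a basis extending `α`. -/

open scoped Matrix BigOperators

section CommRing

variable {R : Type*} [CommRing R]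

theorem exists_linearEquiv_apply_eq_single_zero_of_isUnit {n : ℕ} {v : Fin (n + 1) → R}
    {s : Fin n → R} (hs : IsUnit (v 0 + ∑ j, s j * v j.succ)) :
    ∃ ψ : (Fin (n + 1) → R) ≃ₗ[R] (Fin (n + 1) → R), ψ v = Pi.single 0 1 := by
  let f : Module.Dual R (Fin (n + 1) → R) := ∑ j, s j • LinearMap.proj j.succ
  have hf : f (Pi.single 0 1) = 0 := by simp [f, Fin.succ_ne_zero]
  let w := hs.unit⁻¹ • LinearEquiv.transvection hf v
  have hw : w 0 = 1 := by
    simp [w, LinearMap.transvection.apply, f, Units.smul_def, ← mul_add]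
  have hproj : (LinearMap.proj 0 : Module.Dual R (Fin (n + 1) → R)) (Pi.single 0 1 - w) = 0 := by
    simp [hw]
  refine ⟨(LinearEquiv.transvection hf).trans ((LinearEquiv.smulOfUnit hs.unit⁻¹).trans
    (LinearEquiv.transvection hproj)), ?_⟩
  change LinearMap.transvection _ _ w = _
  simp [LinearMap.transvection.apply, hw]

theorem exists_linearEquiv_cons_apply {n : ℕ} (χ : (Fin n → R) ≃ₗ[R] (Fin n → R))
    (g : Module.Dual R (Fin n → R)) :
    ∃ Φ : (Fin (n + 1) → R) ≃ₗ[R] (Fin (n + 1) → R),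
      ∀ a w, Φ (Fin.cons a w) = Fin.cons (a + g (χ w)) (χ w) := by
  let e := Fin.consLinearEquiv R fun _ : Fin (n + 1) => R
  have he (a : R) (w : Fin n → R) : e (a, w) = Fin.cons a w := rfl
  let f : Module.Dual R (Fin (n + 1) → R) := g ∘ₗ LinearMap.funLeft R R Fin.succ
  have hf (x : Fin (n + 1) → R) : f x = g (Fin.tail x) := rfl
  have hf₀ : f (Pi.single 0 1) = 0 := by
    simp only [hf, Fin.tail_def, Pi.single_apply, Fin.succ_ne_zero, if_false]
    exact g.map_zero
  refine ⟨e.symm.trans (((LinearEquiv.refl R R).prodCongr χ).trans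
    (e.trans (LinearEquiv.transvection hf₀))), fun a w => ?_⟩
  have he' : e.symm (Fin.cons a w) = (a, w) := e.symm_apply_eq.mpr rfl
  simp only [LinearEquiv.trans_apply, he', LinearEquiv.prodCongr_apply,
    LinearEquiv.refl_apply, he, LinearEquiv.transvection.apply, hf, Fin.tail_cons]
  ext j
  refine Fin.cases ?_ (fun j => ?_) j <;> simp [Fin.succ_ne_zero]

theorem LinearIndependent.tail_of_cons_single_zero {m n : ℕ} {γ : Fin m → Fin (n + 1) → R}
    (hγ : LinearIndependent R (Fin.cons (Pi.single 0 1) γ : Fin (m + 1) → Fin (n + 1) → R)) :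
    LinearIndependent R fun i => Fin.tail (γ i) := by
  rw [Fintype.linearIndependent_iff] at hγ ⊢
  intro g hg i
  refine hγ (Fin.cons (-∑ k, g k * γ k 0) g) ?_ i.succ
  ext j
  refine Fin.cases ?_ (fun j => ?_) j
  · simp [Fin.sum_univ_succ]
  · simpa [Fin.sum_univ_succ, Fin.succ_ne_zero, Fin.tail] using congrFun hg j

theorem exists_linearEquiv_apply_eq_single_castLE
    (hR : ∀ (n : ℕ) (v : Fin (n + 1) → R), (∀ x : R, x • v = 0 → x = 0) →
      ∃ ψ : (Fin (n + 1) → R) ≃ₗ[R] (Fin (n + 1) → R), ψ v = Pi.single 0 1) {m : ℕ} :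
    ∀ {n : ℕ} (hmn : m ≤ n) (α : Fin m → Fin n → R), LinearIndependent R α →
      ∃ ψ : (Fin n → R) ≃ₗ[R] (Fin n → R), ∀ i, ψ (α i) = Pi.single (Fin.castLE hmn i) 1 := by
  induction m with
  | zero => exact fun _ _ _ => ⟨LinearEquiv.refl R _, fun i => i.elim0⟩
  | succ m ih =>
    intro n hmn α hα
    obtain ⟨n, rfl⟩ : ∃ k, n = k + 1 := ⟨n - 1, by omega⟩
    obtain ⟨ψ₀, hψ₀⟩ :=
      hR n (α 0) fun x hx => hα.smul_left_injective 0 (hx.trans (zero_smul R _).symm)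
    set γ : Fin m → Fin (n + 1) → R := fun i => ψ₀ (α i.succ)
    have hγ : LinearIndependent R (Fin.cons (Pi.single 0 1) γ : Fin (m + 1) → _) := by
      have h : (Fin.cons (Pi.single 0 1) γ : Fin (m + 1) → _) = ψ₀ ∘ α := by
        ext i : 1
        refine Fin.cases ?_ (fun i => ?_) i <;> simp [hψ₀, γ]
      rw [h]
      exact hα.map' ψ₀.toLinearMap ψ₀.ker
    obtain ⟨χ, hχ⟩ := ih (Nat.le_of_succ_le_succ hmn) _ hγ.tail_of_cons_single_zero
    -- the form cancels the first coordinates `γ i 0` that `χ` leaves untouched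
    obtain ⟨Φ, hΦ⟩ := exists_linearEquiv_cons_apply χ
      (-∑ i, γ i 0 • LinearMap.proj (Fin.castLE (Nat.le_of_succ_le_succ hmn) i))
    refine ⟨ψ₀.trans Φ, fun i => ?_⟩
    refine Fin.cases ?_ (fun i => ?_) i
    · rw [LinearEquiv.trans_apply, ← Fin.cons_self_tail (ψ₀ (α 0)), hΦ, hψ₀]
      have htail : Fin.tail (Pi.single 0 1 : Fin (n + 1) → R) = 0 :=
        funext fun k => Pi.single_eq_of_ne (Fin.succ_ne_zero k) _
      ext j
      refine Fin.cases ?_ (fun j => ?_) j <;> simp [htail, Fin.succ_ne_zero]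
    · change Φ (γ i) = _
      rw [← Fin.cons_self_tail (γ i), hΦ, hχ i]
      ext j
      refine Fin.cases ?_ (fun j => ?_) j <;> simp [Fin.succ_ne_zero, Pi.single_apply]

end CommRing

instance ZMod.instIsPrincipalIdealRing (N : ℕ) : IsPrincipalIdealRing (ZMod N) :=
  .of_surjective (Int.castRingHom _) ZMod.intCast_surjective

theorem Ideal.span_range_eq_top_of_smul_eq_zero {R ι : Type*} [CommRing R]
    [IsPrincipalIdealRing R] [IsArtinianRing R] {v : ι → R}
    (hv : ∀ x : R, x • v = 0 → x = 0) : Ideal.span (Set.range v) = ⊤ := by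
  obtain ⟨d, hd⟩ := (IsPrincipalIdealRing.principal (Ideal.span (Set.range v))).principal
  rw [Ideal.submodule_span_eq] at hd
  have hdvd (i : ι) : ∃ a, a * d = v i :=
    Ideal.mem_span_singleton'.mp (hd ▸ Ideal.subset_span ⟨i, rfl⟩)
  have hd_unit : IsUnit d := by
    refine IsArtinianRing.isUnit_iff_mem_nonZeroDivisors.mpr
      (mem_nonZeroDivisors_iff_right.mpr fun x hx => hv x (funext fun i => ?_))
    obtain ⟨a, ha⟩ := hdvd i
    simp [← ha, mul_left_comm x, hx]
  rw [hd, Ideal.span_singleton_eq_top.mpr hd_unit]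

namespace ZMod

variable {N : ℕ} [NeZero N]

theorem exists_isUnit_add_mul_of_isCoprime {a b : ZMod N} (hab : IsCoprime a b) :
    ∃ t, IsUnit (a + t * b) := by
  obtain ⟨d, hdN, u, hu, rfl⟩ := eq_unit_mul_divisor b
  let π := castHom hdN (ZMod d)
  have hπd : π d = 0 := by simp [π]
  obtain ⟨r, s, hrs⟩ := hab
  have hπa : IsUnit (π a) := by
    refine IsUnit.of_mul_eq_one (π r) ?_
    simpa [hπd, mul_comm] using congrArg π hrs
  obtain ⟨w, hw⟩ := unitsMap_surjective hdN hπa.unit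
  have hπw : π (w - a) = 0 := by
    rw [map_sub, sub_eq_zero]
    exact congrArg Units.val hw
  obtain ⟨k, hk⟩ : ∃ k, (w : ZMod N) - a = d * k := by
    obtain ⟨k, hk⟩ := (natCast_eq_zero_iff _ d).mp ((natCast_val (w - a : ZMod N)).trans hπw)
    exact ⟨k, by rw [← natCast_zmod_val ((w : ZMod N) - a), hk, Nat.cast_mul]⟩
  refine ⟨k * ↑hu.unit⁻¹, ?_⟩
  convert w.isUnit using 1
  calc a + k * ↑hu.unit⁻¹ * (u * d) = a + k * (↑hu.unit⁻¹ * u) * d := by ring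
    _ = w := by rw [hu.val_inv_mul, mul_one, mul_comm, ← hk, add_sub_cancel]

theorem exists_isUnit_add_sum_mul {n : ℕ} {v : Fin (n + 1) → ZMod N}
    (hv : Ideal.span (Set.range v) = ⊤) :
    ∃ s : Fin n → ZMod N, IsUnit (v 0 + ∑ j, s j * v j.succ) := by
  obtain ⟨b, hb⟩ := (IsPrincipalIdealRing.principal (Ideal.span (Set.range (Fin.tail v)))).principal
  rw [Ideal.submodule_span_eq] at hb
  have hcop : IsCoprime (v 0) b := by
    obtain ⟨c, hc⟩ := (Submodule.mem_span_range_iff_exists_fun _).mp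
      (hv ▸ Submodule.mem_top : (1 : ZMod N) ∈ Ideal.span (Set.range v))
    obtain ⟨k, hk⟩ := Ideal.mem_span_singleton'.mp (hb ▸
      (Submodule.mem_span_range_iff_exists_fun _).mpr ⟨Fin.tail c, rfl⟩ :
        ∑ j, Fin.tail c j • Fin.tail v j ∈ Ideal.span {b})
    refine ⟨c 0, k, ?_⟩
    rw [hk, ← hc, Fin.sum_univ_succ]
    rfl
  obtain ⟨t, ht⟩ := exists_isUnit_add_mul_of_isCoprime hcop
  obtain ⟨s, hs⟩ := (Submodule.mem_span_range_iff_exists_fun _).mp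
    (hb ▸ Ideal.mem_span_singleton'.mpr ⟨t, rfl⟩ : t * b ∈ Ideal.span (Set.range (Fin.tail v)))
  rw [← hs] at ht
  exact ⟨s, ht⟩

theorem exists_linearEquiv_apply_eq_single_zero {n : ℕ} {v : Fin (n + 1) → ZMod N}
    (hv : ∀ x : ZMod N, x • v = 0 → x = 0) :
    ∃ ψ : (Fin (n + 1) → ZMod N) ≃ₗ[ZMod N] (Fin (n + 1) → ZMod N), ψ v = Pi.single 0 1 :=
  let ⟨_, hs⟩ := exists_isUnit_add_sum_mul (Ideal.span_range_eq_top_of_smul_eq_zero hv)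
  exists_linearEquiv_apply_eq_single_zero_of_isUnit hs

end ZMod

namespace Paper

theorem stmt_4_general (t : ℕ) (p s : Fin t → ℕ)
    (hp : ∀ i, (p i).Prime)
    (h : ℕ) (hh : h = ∏ i, p i ^ s i)
    (m n : ℕ) (hmn : m ≤ n)
    (α : Fin m → Fin n → ZMod h)
    (hind : ∀ x : Fin m → ZMod h, (∑ i, x i • α i) = 0 → ∀ i, x i = 0) :
    ∃ b : Module.Basis (Fin n) (ZMod h) (Fin n → ZMod h),
      ∀ i : Fin m, b (Fin.castLE hmn i) = α i := by
  have : NeZero h := ⟨hh ▸ Finset.prod_ne_zero_iff.mpr fun i _ => pow_ne_zero _ (hp i).ne_zero⟩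
  obtain ⟨ψ, hψ⟩ := exists_linearEquiv_apply_eq_single_castLE
    (fun _ _ => ZMod.exists_linearEquiv_apply_eq_single_zero) hmn α
    (Fintype.linearIndependent_iff.mpr hind)
  exact ⟨(Pi.basisFun _ _).map ψ.symm, fun i => by simp [← hψ i]⟩

theorem stmt_4 (t : ℕ) (ht : 1 ≤ t) (p s : Fin t → ℕ)
    (hp : ∀ i, (p i).Prime) (hs : ∀ i, 1 ≤ s i) (hpinj : Function.Injective p)
    (h : ℕ) (hh : h = ∏ i, p i ^ s i)
    (m n : ℕ) (hmn : m ≤ n)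
    (α : Fin m → Fin n → ZMod h)
    (hind : ∀ x : Fin m → ZMod h, (∑ i, x i • α i) = 0 → ∀ i, x i = 0) :
    ∃ b : Module.Basis (Fin n) (ZMod h) (Fin n → ZMod h),
      ∀ i : Fin m, b (Fin.castLE hmn i) = α i :=
  stmt_4_general t p s hp h hh m n hmn α hind

end Paper
end

section
/- Let A be an a-subspace and B a b-subspace of Z_h^n, with matrix representations M_A ∈ Z_h^{a×n} and M_B ∈ Z_h^{b×n}, and let M ∈ Z_h^{(a+b)×n} be the matrix obtained by stacking M_A on top of M_B. Define dim(A∨B) as the minimum of dim(W) over all subspaces W of Z_h^n containing both A and B (this minimum exists since Z_h^n itself is an n-subspace). Then dim(A∨B) = a + b − dim(A∩B) = ρ(M), where A∩B is the intersection of the submodules A and B and ρ denotes the inner rank. -/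
open scoped Matrix BigOperators

namespace Paper

/-!
Since `ZMod h` is a quotient of `ℤ`, the Smith normal form puts every `r`-generated submodule of
`(ZMod h)ᵐ` inside a free direct summand of rank at most `r` (`SmithCover`). Applied to `C` in a
factorization `M = P * C` through `innerRank M` rows, this puts `A ⊔ B = rowSpace M` inside an
`innerRank M`-subspace, so `joinDim A B = innerRank M`. Applied to columns, it gives every
`m`-row matrix `M` a unimodular left kernel of size at least `m - innerRank M`; conversely a
unimodular family of size `k` annihilating `M` completes to an invertible matrix, which forces
`innerRank M ≤ m - k`. Splitting a left-kernel vector of `M` as `(x, y)` with `x * MA = -y * MB`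
matches unimodular families in the left kernel of `M` with unimodular families in `A ⊓ B`, so
`innerRank M + sdim (A ⊓ B) = a + b`.
-/

open Matrix

section RowSpace

variable {R : Type*} [CommRing R]

theorem rowSpace_eq_range_vecMulLinear {m n : ℕ} (A : Matrix (Fin m) (Fin n) R) :
    rowSpace A = LinearMap.range A.vecMulLinear :=
  (range_vecMulLinear A).symm

theorem forall_mem_rowSpace_iff {k m n : ℕ} {Y : Matrix (Fin k) (Fin n) R}
    {G : Matrix (Fin m) (Fin n) R} :
    (∀ i, Y i ∈ rowSpace G) ↔ ∃ Z : Matrix (Fin k) (Fin m) R, Y = Z * G := by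
  simp only [rowSpace_eq_range_vecMulLinear, LinearMap.mem_range, vecMulLinear_apply]
  constructor
  · intro hY
    choose Z hZ using hY
    exact ⟨of Z, by ext i j; rw [← hZ i]; rfl⟩
  · rintro ⟨Z, rfl⟩ i
    exact ⟨Z i, rfl⟩

theorem rowSpace_le_iff {k n : ℕ} {Y : Matrix (Fin k) (Fin n) R}
    {W : Submodule R (Fin n → R)} : rowSpace Y ≤ W ↔ ∀ i, Y i ∈ W := by
  rw [rowSpace, Submodule.span_le, Set.range_subset_iff]
  rfl

theorem rowSpace_one (n : ℕ) : rowSpace (1 : Matrix (Fin n) (Fin n) R) = ⊤ := by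
  rw [rowSpace_eq_range_vecMulLinear, LinearMap.range_eq_top]
  exact fun v => ⟨v, vecMul_one v⟩

theorem rowSpace_of_append {a b n : ℕ} (MA : Matrix (Fin a) (Fin n) R)
    (MB : Matrix (Fin b) (Fin n) R) :
    rowSpace (of (Fin.append (fun i => MA i) (fun i => MB i))) = rowSpace MA ⊔ rowSpace MB := by
  have hA : ∀ i, MA i ∈ rowSpace MA := fun i => Submodule.subset_span ⟨i, rfl⟩
  have hB : ∀ i, MB i ∈ rowSpace MB := fun i => Submodule.subset_span ⟨i, rfl⟩
  refine le_antisymm (rowSpace_le_iff.2 fun i => ?_) (sup_le (rowSpace_le_iff.2 fun i => ?_)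
    (rowSpace_le_iff.2 fun i => ?_))
  · refine Fin.addCases (fun i => ?_) (fun i => ?_) i
    · show Fin.append _ _ (Fin.castAdd b i) ∈ _
      exact (Fin.append_left _ _ i).symm ▸ Submodule.mem_sup_left (hA i)
    · show Fin.append _ _ (Fin.natAdd a i) ∈ _
      exact (Fin.append_right _ _ i).symm ▸ Submodule.mem_sup_right (hB i)
  · exact Submodule.subset_span ⟨Fin.castAdd b i, Fin.append_left _ _ i⟩
  · exact Submodule.subset_span ⟨Fin.natAdd a i, Fin.append_right _ _ i⟩

theorem mul_mul_cancel_of_forall_mem_rowSpace {k m n : ℕ} {Y : Matrix (Fin k) (Fin n) R}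
    {C : Matrix (Fin m) (Fin n) R} {C' : Matrix (Fin n) (Fin m) R} (hC : C * C' = 1)
    (hY : ∀ i, Y i ∈ rowSpace C) : Y * C' * C = Y := by
  obtain ⟨Z, rfl⟩ := forall_mem_rowSpace_iff.1 hY
  rw [Matrix.mul_assoc Z, hC, Matrix.mul_one]

theorem card_le_card_of_mul_eq_one [Nontrivial R] {ι κ : Type*} [Fintype ι] [Fintype κ]
    [DecidableEq ι] {A : Matrix ι κ R} {B : Matrix κ ι R} (h : A * B = 1) :
    Fintype.card ι ≤ Fintype.card κ :=
  calc Fintype.card ι = (A * B).rank := by rw [h, rank_one]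
    _ ≤ A.rank := rank_mul_le_left A B
    _ ≤ Fintype.card κ := rank_le_card_width A

theorem HasRightInv.height_le_width [Nontrivial R] {m n : ℕ} {A : Matrix (Fin m) (Fin n) R}
    (hA : HasRightInv A) : m ≤ n := by
  obtain ⟨B, hB⟩ := hA
  simpa using card_le_card_of_mul_eq_one hB

theorem hasRightInv_submatrix {k m : ℕ} {T T' : Matrix (Fin m) (Fin m) R} (hT : T * T' = 1)
    (e : Fin k ↪ Fin m) : HasRightInv (T.submatrix e id) :=
  ⟨T'.submatrix id e, by
    rw [← submatrix_mul _ _ _ _ _ Function.bijective_id, hT, submatrix_one _ e.injective]⟩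

theorem innerRank_le_of_eq_mul {m n r : ℕ} {M : Matrix (Fin m) (Fin n) R}
    (B : Matrix (Fin m) (Fin r) R) (C : Matrix (Fin r) (Fin n) R) (h : M = B * C) :
    innerRank M ≤ r :=
  Nat.sInf_le ⟨B, C, h⟩

theorem exists_eq_mul_innerRank {m n : ℕ} (M : Matrix (Fin m) (Fin n) R) :
    ∃ (B : Matrix (Fin m) (Fin (innerRank M)) R) (C : Matrix (Fin (innerRank M)) (Fin n) R),
      M = B * C :=
  Nat.sInf_mem (s := {r | ∃ (B : Matrix (Fin m) (Fin r) R) (C : Matrix (Fin r) (Fin n) R),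
    M = B * C}) ⟨n, M, 1, (Matrix.mul_one M).symm⟩

theorem sdim_bddAbove [Nontrivial R] {n : ℕ} (V : Submodule R (Fin n → R)) :
    BddAbove {m | ∃ v : Fin m → Fin n → R, (∀ i, v i ∈ V) ∧ Unimodular v} :=
  ⟨n, fun _ ⟨_, _, hv⟩ => HasRightInv.height_le_width hv⟩

theorem exists_unimodular_sdim [Nontrivial R] {n : ℕ} (V : Submodule R (Fin n → R)) :
    ∃ v : Fin (sdim V) → Fin n → R, (∀ i, v i ∈ V) ∧ Unimodular v :=
  Nat.sSup_mem (s := {m | ∃ v : Fin m → Fin n → R, (∀ i, v i ∈ V) ∧ Unimodular v})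
    ⟨0, ![], finZeroElim, 0, Subsingleton.elim _ _⟩ (sdim_bddAbove V)

theorem le_sdim [Nontrivial R] {m n : ℕ} {V : Submodule R (Fin n → R)} {v : Fin m → Fin n → R}
    (hV : ∀ i, v i ∈ V) (hv : Unimodular v) : m ≤ sdim V :=
  le_csSup (sdim_bddAbove V) ⟨v, hV, hv⟩

theorem innerRank_le_joinDim {m n : ℕ} {A B : Submodule R (Fin n → R)}
    {M : Matrix (Fin m) (Fin n) R} (hM : rowSpace M ≤ A ⊔ B) : innerRank M ≤ joinDim A B := by
  refine le_csInf ⟨n, ⊤, ⟨1, ⟨1, Matrix.mul_one _⟩, rowSpace_one n⟩, le_top, le_top⟩ ?_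
  rintro d ⟨_, ⟨C, -, rfl⟩, hA, hB⟩
  obtain ⟨Z, hZ⟩ := forall_mem_rowSpace_iff.1 (rowSpace_le_iff.1 (hM.trans (sup_le hA hB)))
  exact innerRank_le_of_eq_mul Z C hZ

theorem joinDim_le {k n : ℕ} {A B : Submodule R (Fin n → R)} {C : Matrix (Fin k) (Fin n) R}
    (hC : HasRightInv C) (hA : A ≤ rowSpace C) (hB : B ≤ rowSpace C) : joinDim A B ≤ k :=
  Nat.sInf_le ⟨_, ⟨C, hC, rfl⟩, hA, hB⟩

end RowSpace

section Stacking

variable {R : Type*} [CommRing R]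

theorem of_append_mul_of_append {k a b n : ℕ} (X : Matrix (Fin k) (Fin a) R)
    (Y : Matrix (Fin k) (Fin b) R) (P : Matrix (Fin a) (Fin n) R) (Q : Matrix (Fin b) (Fin n) R) :
    of (fun i => Fin.append (X i) (Y i)) * of (Fin.append (fun i => P i) (fun i => Q i)) =
      X * P + Y * Q := by
  ext i j
  simp [mul_apply, Fin.sum_univ_add]

theorem mul_of_append {k n a b : ℕ} (V : Matrix (Fin k) (Fin n) R) (X : Matrix (Fin n) (Fin a) R)
    (Y : Matrix (Fin n) (Fin b) R) :
    V * of (fun c => Fin.append (X c) (Y c)) = of fun i => Fin.append ((V * X) i) ((V * Y) i) := by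
  ext i j
  refine Fin.addCases (fun j => ?_) (fun j => ?_) j <;> simp [mul_apply]

variable {a b n : ℕ} {MA : Matrix (Fin a) (Fin n) R} {MB : Matrix (Fin b) (Fin n) R}

theorem exists_hasRightInv_mul_eq_zero_of_inf (hMA : HasRightInv MA) (hMB : HasRightInv MB)
    {k : ℕ} {V : Matrix (Fin k) (Fin n) R} (hV : HasRightInv V)
    (hVAB : ∀ i, V i ∈ rowSpace MA ⊓ rowSpace MB) :
    ∃ U : Matrix (Fin k) (Fin (a + b)) R,
      HasRightInv U ∧ U * of (Fin.append (fun i => MA i) (fun i => MB i)) = 0 := by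
  obtain ⟨MA', hA⟩ := hMA
  obtain ⟨MB', hB⟩ := hMB
  obtain ⟨V', hV'⟩ := hV
  have hVA : V * MA' * MA = V := mul_mul_cancel_of_forall_mem_rowSpace hA fun i => (hVAB i).1
  have hVB : V * MB' * MB = V := mul_mul_cancel_of_forall_mem_rowSpace hB fun i => (hVAB i).2
  refine ⟨of fun i => Fin.append ((V * MA') i) ((-(V * MB')) i),
    ⟨of (Fin.append (fun i => MA i) (fun i => (0 : Matrix (Fin b) (Fin n) R) i)) * V', ?_⟩, ?_⟩
  · rw [← Matrix.mul_assoc, of_append_mul_of_append, Matrix.mul_zero, add_zero, hVA, hV']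
  · rw [of_append_mul_of_append, Matrix.neg_mul, hVA, hVB, add_neg_cancel]

theorem exists_hasRightInv_inf_of_mul_eq_zero (hMA : HasRightInv MA) (hMB : HasRightInv MB)
    {j : ℕ} {x : Matrix (Fin j) (Fin (a + b)) R} (hx : HasRightInv x)
    (hxM : x * of (Fin.append (fun i => MA i) (fun i => MB i)) = 0) :
    ∃ V : Matrix (Fin j) (Fin n) R, HasRightInv V ∧ ∀ i, V i ∈ rowSpace MA ⊓ rowSpace MB := by
  obtain ⟨MA', hA⟩ := hMA
  obtain ⟨MB', hB⟩ := hMB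
  obtain ⟨X', hX'⟩ := hx
  set xa : Matrix (Fin j) (Fin a) R := x.submatrix id (Fin.castAdd b)
  set xb : Matrix (Fin j) (Fin b) R := x.submatrix id (Fin.natAdd a)
  have hx : x = of fun i => Fin.append (xa i) (xb i) :=
    funext fun i => Fin.append_castAdd_natAdd.symm
  rw [hx, of_append_mul_of_append, add_eq_zero_iff_eq_neg] at hxM
  have hxa : xa * MA * MA' = xa := by rw [Matrix.mul_assoc, hA, Matrix.mul_one]
  have hxb : xa * MA * -MB' = xb := by
    rw [hxM, Matrix.neg_mul, Matrix.mul_neg, neg_neg, Matrix.mul_assoc, hB, Matrix.mul_one]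
  refine ⟨xa * MA, ⟨of (fun c => Fin.append (MA' c) ((-MB') c)) * X', ?_⟩, fun i => ⟨?_, ?_⟩⟩
  · rw [← Matrix.mul_assoc, mul_of_append, hxa, hxb, ← hx, hX']
  · exact forall_mem_rowSpace_iff.2 ⟨xa, rfl⟩ i
  · rw [hxM, ← Matrix.neg_mul]
    exact forall_mem_rowSpace_iff.2 ⟨-xb, rfl⟩ i

end Stacking

/-- Every `r`-generated submodule of `Rᵐ` lies in a free direct summand of rank at most `r` with
free complement; by the Smith normal form this holds over quotients of principal ideal domains. -/
def SmithCover (R : Type*) [CommRing R] : Prop :=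
  ∀ ⦃m r : ℕ⦄ (Y : Matrix (Fin r) (Fin m) R), ∃ (k : ℕ) (T T' : Matrix (Fin m) (Fin m) R)
    (e : Fin k ↪ Fin m) (Z : Matrix (Fin r) (Fin k) R),
    k ≤ r ∧ T * T' = 1 ∧ Y = Z * T.submatrix e id

namespace SmithCover

theorem of_surjective {R S : Type*} [CommRing R] [CommRing S] [IsDomain S]
    [IsPrincipalIdealRing S] (f : S →+* R) (hf : Function.Surjective f) : SmithCover R := by
  intro m r Y
  choose g hg using hf
  set Y' : Matrix (Fin r) (Fin m) S := Y.map g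
  obtain ⟨k, snf⟩ := (rowSpace Y').smithNormalForm (Pi.basisFun S (Fin m))
  set T : Matrix (Fin m) (Fin m) S := of fun i => snf.bM i
  have hT : T * (snf.bM.toMatrix (Pi.basisFun S (Fin m)))ᵀ = 1 := by
    rw [← transpose_one, ← snf.bM.toMatrix_mul_toMatrix_flip (Pi.basisFun S (Fin m)),
      transpose_mul]
    rfl
  have hk : k ≤ r :=
    calc k = Module.finrank S (rowSpace Y') := by simp [Module.finrank_eq_card_basis snf.bN]
      _ ≤ r := (finrank_range_le_card fun i => Y' i).trans_eq (Fintype.card_fin r)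
  have hY' : ∀ i, Y' i ∈ rowSpace (T.submatrix snf.f id) := by
    intro i
    have hspan :
        rowSpace (T.submatrix snf.f id) = Submodule.span S (snf.bM '' Set.range snf.f) := by
      rw [rowSpace, ← Set.range_comp]
      rfl
    rw [hspan, Module.Basis.mem_span_image]
    intro j hj
    by_contra hjf
    exact Finsupp.mem_support_iff.1 hj
      (snf.repr_eq_zero_of_notMem_range ⟨Y' i, Submodule.subset_span ⟨i, rfl⟩⟩ hjf)
  obtain ⟨Z, hZ⟩ := forall_mem_rowSpace_iff.1 hY'
  refine ⟨k, T.map f, (snf.bM.toMatrix (Pi.basisFun S (Fin m)))ᵀ.map f, snf.f, Z.map f, hk,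
    by rw [← Matrix.map_mul, hT, Matrix.map_one _ f.map_zero f.map_one], ?_⟩
  have hYY' : Y = Y'.map f := by
    ext i j
    exact (hg _).symm
  rw [hYY', congrArg (Matrix.map · f) hZ, Matrix.map_mul]
  rfl

variable {R : Type*} [CommRing R]

theorem joinDim_le_innerRank (hR : SmithCover R) {m n : ℕ} {A B : Submodule R (Fin n → R)}
    {M : Matrix (Fin m) (Fin n) R} (hM : A ⊔ B ≤ rowSpace M) : joinDim A B ≤ innerRank M := by
  obtain ⟨P, C, hPC⟩ := exists_eq_mul_innerRank M
  obtain ⟨k, T, T', e, Z, hk, hT, hC⟩ := hR C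
  have hMG : A ⊔ B ≤ rowSpace (T.submatrix e id) := hM.trans <| rowSpace_le_iff.2 <|
    forall_mem_rowSpace_iff.2 ⟨P * Z, hPC.trans (by rw [hC, Matrix.mul_assoc])⟩
  exact (joinDim_le (hasRightInv_submatrix hT e) (le_sup_left.trans hMG)
    (le_sup_right.trans hMG)).trans hk

theorem exists_hasRightInv_mul_eq_zero (hR : SmithCover R) {m r : ℕ}
    (X : Matrix (Fin m) (Fin r) R) :
    ∃ j, m ≤ j + r ∧ ∃ x : Matrix (Fin j) (Fin m) R, HasRightInv x ∧ x * X = 0 := by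
  classical
  obtain ⟨k, T, T', e, Z, hk, hT, hX⟩ := hR Xᵀ
  set S : Finset (Fin m) := (Finset.univ.map e)ᶜ
  set g := S.orderEmbOfFin rfl
  have hT' : T'ᵀ * Tᵀ = 1 := by rw [← transpose_mul, hT, transpose_one]
  have hge : ∀ i l, g i ≠ e l := fun i l hil => Finset.mem_compl.1 (S.orderEmbOfFin_mem rfl i)
    (hil ▸ Finset.mem_map_of_mem e (Finset.mem_univ l))
  refine ⟨S.card, ?_, T'ᵀ.submatrix g id, hasRightInv_submatrix hT' g.toEmbedding, ?_⟩
  · simp only [S, Finset.card_compl, Finset.card_map, Finset.card_univ, Fintype.card_fin]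
    omega
  · rw [← transpose_transpose X, hX, transpose_mul, transpose_submatrix, ← Matrix.mul_assoc,
      ← submatrix_mul _ _ _ _ _ Function.bijective_id, hT']
    convert Matrix.zero_mul Zᵀ
    ext i l
    simp [one_apply, hge i l]

theorem innerRank_add_le [Nontrivial R] (hR : SmithCover R) {k m n : ℕ}
    {u : Matrix (Fin k) (Fin m) R} (hu : HasRightInv u) {M : Matrix (Fin m) (Fin n) R}
    (huM : u * M = 0) : innerRank M + k ≤ m := by
  classical
  obtain ⟨U', hU'⟩ := hu
  obtain ⟨j, hj, x, ⟨X', hX'⟩, hxU⟩ := hR.exists_hasRightInv_mul_eq_zero U'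
  -- `[u; x]` has the right inverse `[U', P * X']`, hence is square and invertible.
  set P := 1 - U' * u
  have huP : u * P = 0 := by rw [Matrix.mul_sub, Matrix.mul_one, ← Matrix.mul_assoc, hU',
    Matrix.one_mul, sub_self]
  have hxP : x * P = x := by rw [Matrix.mul_sub, Matrix.mul_one, ← Matrix.mul_assoc, hxU,
    Matrix.zero_mul, sub_zero]
  have hTS : fromRows u x * fromCols U' (P * X') = 1 := by
    rw [fromRows_mul_fromCols, ← Matrix.mul_assoc, ← Matrix.mul_assoc, hU', hxU, huP, hxP, hX',
      Matrix.zero_mul, fromBlocks_one]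
  have hcard : k + j ≤ m := by simpa using card_le_card_of_mul_eq_one hTS
  have hST := (mul_eq_one_comm_of_equiv (finSumFinEquiv.trans (finCongr (by omega)))).1 hTS
  rw [fromCols_mul_fromRows] at hST
  have hM : M = P * X' * (x * M) := by
    calc M = (U' * u + P * X' * x) * M := by rw [hST, Matrix.one_mul]
      _ = P * X' * (x * M) := by
        rw [Matrix.add_mul, Matrix.mul_assoc U', huM, Matrix.mul_zero, zero_add, Matrix.mul_assoc]
  have := innerRank_le_of_eq_mul _ _ hM
  omega

theorem joinDim_eq_innerRank (hR : SmithCover R) {m n : ℕ} {A B : Submodule R (Fin n → R)}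
    {M : Matrix (Fin m) (Fin n) R} (hM : rowSpace M = A ⊔ B) : joinDim A B = innerRank M :=
  le_antisymm (hR.joinDim_le_innerRank hM.ge) (innerRank_le_joinDim hM.le)

theorem innerRank_add_sdim_inf [Nontrivial R] (hR : SmithCover R) {a b n : ℕ}
    {MA : Matrix (Fin a) (Fin n) R} {MB : Matrix (Fin b) (Fin n) R} (hMA : HasRightInv MA)
    (hMB : HasRightInv MB) :
    innerRank (of (Fin.append (fun i => MA i) (fun i => MB i))) +
      sdim (rowSpace MA ⊓ rowSpace MB) = a + b := by
  apply le_antisymm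
  · obtain ⟨V, hVAB, hV⟩ := exists_unimodular_sdim (rowSpace MA ⊓ rowSpace MB)
    obtain ⟨U, hU, hUM⟩ := exists_hasRightInv_mul_eq_zero_of_inf hMA hMB hV hVAB
    exact hR.innerRank_add_le hU hUM
  · obtain ⟨P, C, hPC⟩ :=
      exists_eq_mul_innerRank (of (Fin.append (fun i => MA i) (fun i => MB i)))
    obtain ⟨j, hj, x, hx, hxP⟩ := hR.exists_hasRightInv_mul_eq_zero P
    obtain ⟨V, hV, hVAB⟩ := exists_hasRightInv_inf_of_mul_eq_zero hMA hMB hx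
      ((congrArg (x * ·) hPC).trans (by rw [← Matrix.mul_assoc, hxP, Matrix.zero_mul]))
    have := le_sdim hVAB hV
    omega

end SmithCover

theorem stmt_6_general (t : ℕ) (ht : 1 ≤ t) (p s : Fin t → ℕ)
    (hp : ∀ i, (p i).Prime) (hs : ∀ i, 1 ≤ s i)
    (h : ℕ) (hh : h = ∏ i, p i ^ s i)
    (a b n : ℕ)
    (A B : Submodule (ZMod h) (Fin n → ZMod h))
    (MA : Matrix (Fin a) (Fin n) (ZMod h)) (MB : Matrix (Fin b) (Fin n) (ZMod h))
    (hMA : HasRightInv MA ∧ rowSpace MA = A)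
    (hMB : HasRightInv MB ∧ rowSpace MB = B)
    (M : Matrix (Fin (a + b)) (Fin n) (ZMod h))
    (hM : M = Matrix.of (Fin.append (fun i => MA i) (fun i => MB i))) :
    joinDim A B = a + b - sdim (A ⊓ B) ∧ joinDim A B = innerRank M := by
  have h_one_lt : 1 < h := by
    let i : Fin t := ⟨0, ht⟩
    calc 1 < p i ^ s i := Nat.one_lt_pow (Nat.one_le_iff_ne_zero.1 (hs i)) (hp i).one_lt
      _ ≤ h := hh ▸ Nat.le_of_dvd (Finset.prod_pos fun i _ => pow_pos (hp i).pos _)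
        (Finset.dvd_prod_of_mem _ (Finset.mem_univ i))
  have : Nontrivial (ZMod h) := ZMod.nontrivial_iff.2 h_one_lt.ne'
  have hR : SmithCover (ZMod h) :=
    SmithCover.of_surjective (Int.castRingHom _) ZMod.intCast_surjective
  obtain ⟨hMA, rfl⟩ := hMA
  obtain ⟨hMB, rfl⟩ := hMB
  subst hM
  have hjoin := hR.joinDim_eq_innerRank (rowSpace_of_append MA MB)
  have hsum := hR.innerRank_add_sdim_inf hMA hMB
  exact ⟨by omega, hjoin⟩

theorem stmt_6 (t : ℕ) (ht : 1 ≤ t) (p s : Fin t → ℕ)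
    (hp : ∀ i, (p i).Prime) (hs : ∀ i, 1 ≤ s i) (hpinj : Function.Injective p)
    (h : ℕ) (hh : h = ∏ i, p i ^ s i)
    (a b n : ℕ)
    (A B : Submodule (ZMod h) (Fin n → ZMod h))
    (MA : Matrix (Fin a) (Fin n) (ZMod h)) (MB : Matrix (Fin b) (Fin n) (ZMod h))
    (hMA : HasRightInv MA ∧ rowSpace MA = A)
    (hMB : HasRightInv MB ∧ rowSpace MB = B)
    (M : Matrix (Fin (a + b)) (Fin n) (ZMod h))
    (hM : M = Matrix.of (Fin.append (fun i => MA i) (fun i => MB i))) :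
    joinDim A B = a + b - sdim (A ⊓ B) ∧ joinDim A B = innerRank M :=
  stmt_6_general t ht p s hp hs h hh a b n A B MA MB hMA hMB M hM

end Paper
end
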